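/- (SGL path start.) Let f : ℝ^p → ℝ be convex and differentiable and λ > 0. Then 0 is a minimizer of β ↦ f(β) + λ‖β‖_sgl if and only if for every group g and every x ∈ ℝ^{p_g}, ⟨∇_g f(0), x⟩ ≤ λ(α‖x‖₁ + (1−α)√p_g‖x‖₂). Consequently, the smallest λ for which the all-zero vector is a solution is λ_max = max_{g} sup{⟨∇_g f(0), x⟩ : x ∈ ℝ^{p_g}, α‖x‖₁ + (1−α)√p_g‖x‖₂ ≤ 1}, i.e., λ_max = ‖∇f(0)‖*_sgl = max_g τ_g^{−1}‖∇_g f(0)‖_{ε_g}. -/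

import Mathlib

open scoped BigOperators

noncomputable def sglNorm {p m : ℕ} (G : Fin m → Finset (Fin p)) (α : ℝ)
    (β : Fin p → ℝ) : ℝ :=
  α * ∑ i, |β i| +
    (1 - α) * ∑ g, Real.sqrt ((G g).card) * Real.sqrt (∑ i ∈ G g, (β i) ^ 2)

/-- The ℓ¹-ℓ² combination `α‖x‖₁ + (1-α)√p_g‖x‖₂` restricted to a group `s`. -/
noncomputable def groupNorm {p : ℕ} (s : Finset (Fin p)) (α : ℝ) (x : Fin p → ℝ) : ℝ :=
  α * ∑ i ∈ s, |x i| + (1 - α) * Real.sqrt s.card * Real.sqrt (∑ i ∈ s, (x i) ^ 2)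

lemma groupNorm_nonneg {p : ℕ} (s : Finset (Fin p)) {α : ℝ} (hα : α ∈ Set.Icc (0:ℝ) 1)
    (x : Fin p → ℝ) : 0 ≤ groupNorm s α x := by
  obtain ⟨h0, h1⟩ := hα
  have ha : (0:ℝ) ≤ 1 - α := by linarith
  have h2 : (0:ℝ) ≤ ∑ i ∈ s, |x i| := Finset.sum_nonneg fun i _ => abs_nonneg _
  unfold groupNorm
  have := Real.sqrt_nonneg (s.card : ℝ)
  have := Real.sqrt_nonneg (∑ i ∈ s, (x i) ^ 2)
  positivity

lemma groupNorm_zero {p : ℕ} (s : Finset (Fin p)) (α : ℝ) :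
    groupNorm s α (0 : Fin p → ℝ) = 0 := by
  simp [groupNorm]

lemma sglNorm_zero {p m : ℕ} (G : Fin m → Finset (Fin p)) (α : ℝ) :
    sglNorm G α (0 : Fin p → ℝ) = 0 := by
  simp [sglNorm]

lemma groupNorm_smul {p : ℕ} (s : Finset (Fin p)) (α : ℝ) (t : ℝ) (x : Fin p → ℝ) :
    groupNorm s α (t • x) = |t| * groupNorm s α x := by
  unfold groupNorm
  have h1 : ∑ i ∈ s, |(t • x) i| = |t| * ∑ i ∈ s, |x i| := by
    rw [Finset.mul_sum]; exact Finset.sum_congr rfl fun i _ => by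
      simp [abs_mul]
  have h2 : Real.sqrt (∑ i ∈ s, ((t • x) i) ^ 2) = |t| * Real.sqrt (∑ i ∈ s, (x i) ^ 2) := by
    have : ∑ i ∈ s, ((t • x) i) ^ 2 = t ^ 2 * ∑ i ∈ s, (x i) ^ 2 := by
      rw [Finset.mul_sum]; exact Finset.sum_congr rfl fun i _ => by
        simp [mul_pow]
    rw [this, Real.sqrt_mul (sq_nonneg t), Real.sqrt_sq_eq_abs]
  rw [h1, h2]; ring

lemma sglNorm_smul {p m : ℕ} (G : Fin m → Finset (Fin p)) (α : ℝ) (t : ℝ) (x : Fin p → ℝ) :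
    sglNorm G α (t • x) = |t| * sglNorm G α x := by
  unfold sglNorm
  have h1 : ∑ i, |(t • x) i| = |t| * ∑ i, |x i| := by
    rw [Finset.mul_sum]; exact Finset.sum_congr rfl fun i _ => by simp [abs_mul]
  have h2 : ∀ g, Real.sqrt (((G g).card : ℝ)) * Real.sqrt (∑ i ∈ G g, ((t • x) i) ^ 2)
      = |t| * (Real.sqrt (((G g).card : ℝ)) * Real.sqrt (∑ i ∈ G g, (x i) ^ 2)) := by
    intro g
    have : ∑ i ∈ G g, ((t • x) i) ^ 2 = t ^ 2 * ∑ i ∈ G g, (x i) ^ 2 := by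
      rw [Finset.mul_sum]; exact Finset.sum_congr rfl fun i _ => by simp [mul_pow]
    rw [this, Real.sqrt_mul (sq_nonneg t), Real.sqrt_sq_eq_abs]; ring
  rw [h1, Finset.sum_congr rfl fun g _ => h2 g, ← Finset.mul_sum]
  ring

section
variable {p m : ℕ} (G : Fin m → Finset (Fin p))

lemma sum_partition (hpart : ∀ i : Fin p, ∃! g : Fin m, i ∈ G g) (h : Fin p → ℝ) :
    ∑ g, ∑ i ∈ G g, h i = ∑ i, h i := by
  classical
  have hG : ∀ g, G g = Finset.univ.filter (fun i => (hpart i).choose = g) := by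
    intro g
    ext i
    simp only [Finset.mem_filter, Finset.mem_univ, true_and]
    constructor
    · intro hi
      exact ((hpart i).choose_spec.2 g hi).symm
    · rintro rfl
      exact (hpart i).choose_spec.1
  calc ∑ g, ∑ i ∈ G g, h i
      = ∑ g, ∑ i ∈ Finset.univ.filter (fun i => (hpart i).choose = g), h i :=
        Finset.sum_congr rfl fun g _ => by rw [hG g]
    _ = ∑ i, h i := Finset.sum_fiberwise _ _ _

-- x supported in G g: sglNorm collapses to groupNorm
lemma sglNorm_of_support (hpart : ∀ i : Fin p, ∃! g : Fin m, i ∈ G g) (α : ℝ)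
    (g : Fin m) (x : Fin p → ℝ) (hx : ∀ i ∉ G g, x i = 0) :
    sglNorm G α x = groupNorm (G g) α x := by
  classical
  have hdisj : ∀ g', g' ≠ g → ∀ i ∈ G g', x i = 0 := by
    intro g' hg' i hi
    refine hx i fun hig => hg' ?_
    obtain ⟨u, -, hu⟩ := hpart i
    rw [hu g' hi, hu g hig]
  have h1 : ∑ i, |x i| = ∑ i ∈ G g, |x i| := by
    rw [← sum_partition G hpart]
    rw [Finset.sum_eq_single g]
    · intro g' _ hg'
      exact Finset.sum_eq_zero fun i hi => by rw [hdisj g' hg' i hi, abs_zero]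
    · intro h; exact absurd (Finset.mem_univ g) h
  have h2 : ∀ g', g' ≠ g → Real.sqrt (((G g').card : ℝ)) * Real.sqrt (∑ i ∈ G g', (x i) ^ 2) = 0 := by
    intro g' hg'
    have : ∑ i ∈ G g', (x i) ^ 2 = 0 :=
      Finset.sum_eq_zero fun i hi => by rw [hdisj g' hg' i hi]; ring
    rw [this, Real.sqrt_zero, mul_zero]
  unfold sglNorm groupNorm
  rw [h1, Finset.sum_eq_single g (fun g' _ hg' => h2 g' hg') (fun h => absurd (Finset.mem_univ g) h)]
  ring

lemma sglNorm_eq_sum (hpart : ∀ i : Fin p, ∃! g : Fin m, i ∈ G g) (α : ℝ) (b : Fin p → ℝ) :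
    sglNorm G α b = ∑ g, groupNorm (G g) α b := by
  unfold sglNorm groupNorm
  rw [← sum_partition G hpart (fun i => |b i|), Finset.mul_sum, Finset.mul_sum,
    ← Finset.sum_add_distrib]
  exact Finset.sum_congr rfl fun g _ => by ring

-- positivity of groupNorm on nonzero supported vectors
lemma groupNorm_pos {α : ℝ} (hα : α ∈ Set.Icc (0:ℝ) 1) (s : Finset (Fin p))
    (x : Fin p → ℝ) (hx : ∀ i ∉ s, x i = 0) (hne : x ≠ 0) :
    0 < groupNorm s α x := by
  obtain ⟨h0, h1⟩ := hα
  obtain ⟨i, hi⟩ : ∃ i, x i ≠ 0 := by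
    by_contra h
    push_neg at h
    exact hne (funext h)
  have his : i ∈ s := by
    by_contra h
    exact hi (hx i h)
  have habs : 0 < |x i| := abs_pos.2 hi
  have hsum1 : |x i| ≤ ∑ j ∈ s, |x j| :=
    Finset.single_le_sum (fun j _ => abs_nonneg (x j)) his
  have hsum2 : (x i) ^ 2 ≤ ∑ j ∈ s, (x j) ^ 2 :=
    Finset.single_le_sum (fun j _ => sq_nonneg (x j)) his
  have hcard : (1:ℝ) ≤ Real.sqrt s.card := by
    rw [show (1:ℝ) = Real.sqrt 1 by simp]
    apply Real.sqrt_le_sqrt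
    exact_mod_cast Finset.card_pos.2 ⟨i, his⟩
  have hs2 : |x i| ≤ Real.sqrt (∑ j ∈ s, (x j) ^ 2) := by
    rw [← Real.sqrt_sq_eq_abs]
    exact Real.sqrt_le_sqrt hsum2
  have key : |x i| ≤ groupNorm s α x := by
    unfold groupNorm
    have hA : α * |x i| ≤ α * ∑ j ∈ s, |x j| := by
      apply mul_le_mul_of_nonneg_left hsum1 h0
    have hB : (1 - α) * |x i| ≤ (1 - α) * Real.sqrt s.card * Real.sqrt (∑ j ∈ s, (x j) ^ 2) := by
      have h1a : (0:ℝ) ≤ 1 - α := by linarith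
      calc (1 - α) * |x i| ≤ (1 - α) * (Real.sqrt s.card * Real.sqrt (∑ j ∈ s, (x j) ^ 2)) := by
            apply mul_le_mul_of_nonneg_left _ h1a
            calc |x i| = 1 * |x i| := (one_mul _).symm
              _ ≤ Real.sqrt s.card * Real.sqrt (∑ j ∈ s, (x j) ^ 2) :=
                mul_le_mul hcard hs2 (abs_nonneg _) (Real.sqrt_nonneg _)
        _ = (1 - α) * Real.sqrt s.card * Real.sqrt (∑ j ∈ s, (x j) ^ 2) := by ring
    calc |x i| = α * |x i| + (1 - α) * |x i| := by ring
      _ ≤ _ := add_le_add hA hB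
  linarith
end

section analytic
variable {p : ℕ} {f : (Fin p → ℝ) → ℝ}

lemma hasDerivAt_line (hdiff : Differentiable ℝ f) (x : Fin p → ℝ) :
    HasDerivAt (fun t : ℝ => f (t • x)) (fderiv ℝ f 0 x) 0 := by
  have hline : HasDerivAt (fun t : ℝ => t • x) x 0 := by
    simpa using (hasDerivAt_id (0:ℝ)).smul_const x
  have hF : HasFDerivAt f (fderiv ℝ f 0) ((fun t : ℝ => t • x) 0) := by
    simpa using (hdiff 0).hasFDerivAt
  exact hF.comp_hasDerivAt 0 hline

lemma convexOn_line (hconv : ConvexOn ℝ Set.univ f) (x : Fin p → ℝ) :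
    ConvexOn ℝ Set.univ (fun t : ℝ => f (t • x)) := by
  have A : (LinearMap.toSpanSingleton ℝ (Fin p → ℝ) x).toAffineMap = _ := rfl
  have := hconv.comp_affineMap (LinearMap.toSpanSingleton ℝ (Fin p → ℝ) x).toAffineMap
  simpa [Set.preimage_univ, Function.comp_def] using this

/-- gradient inequality at 0 -/
lemma fderiv_le_sub (hconv : ConvexOn ℝ Set.univ f) (hdiff : Differentiable ℝ f)
    (v : Fin p → ℝ) : fderiv ℝ f 0 v ≤ f v - f 0 := by
  have hg := hasDerivAt_line hdiff v
  have hc := convexOn_line hconv v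
  have := hc.le_slope_of_hasDerivAt (Set.mem_univ (0:ℝ)) (Set.mem_univ (1:ℝ)) zero_lt_one hg
  rw [slope_def_field] at this
  simpa using this

/-- if `f 0 ≤ f (t • x) + (-t) * C` for all `t < 0`, then `fderiv f 0 x ≤ C`. -/
lemma fderiv_le_of_min (hdiff : Differentiable ℝ f) (x : Fin p → ℝ) (C : ℝ)
    (hmin : ∀ t : ℝ, t < 0 → f 0 ≤ f (t • x) + (-t) * C) :
    fderiv ℝ f 0 x ≤ C := by
  have hg := hasDerivAt_line hdiff x
  have htend : Filter.Tendsto (slope (fun t : ℝ => f (t • x)) 0) (nhdsWithin 0 (Set.Iio 0))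
      (nhds (fderiv ℝ f 0 x)) := by
    refine (hasDerivAt_iff_tendsto_slope.mp hg).mono_left (nhdsWithin_mono _ ?_)
    intro t ht
    exact ne_of_lt ht
  refine le_of_tendsto htend ?_
  refine Filter.eventually_of_mem self_mem_nhdsWithin ?_
  intro t (ht : t < 0)
  rw [slope_def_field]
  rw [div_le_iff_of_neg (by simpa using ht)]
  have h := hmin t ht
  simp only [zero_smul]
  nlinarith
end analytic

lemma groupNorm_congr {p : ℕ} (s : Finset (Fin p)) (α : ℝ) {x y : Fin p → ℝ}
    (h : ∀ i ∈ s, x i = y i) : groupNorm s α x = groupNorm s α y := by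
  unfold groupNorm
  have h1 : ∑ i ∈ s, |x i| = ∑ i ∈ s, |y i| :=
    Finset.sum_congr rfl fun i hi => by rw [h i hi]
  have h2 : ∑ i ∈ s, (x i) ^ 2 = ∑ i ∈ s, (y i) ^ 2 :=
    Finset.sum_congr rfl fun i hi => by rw [h i hi]
  rw [h1, h2]


/-- SGL path start: `0` minimizes the SGL objective iff for every group the pairing of
`∇_g f(0)` is dominated by `λ` times the group norm; equivalently, iff `λ` dominates the
group-wise suprema over the unit balls (so the path start is the SGL dual norm of `∇f(0)`). -/
theorem sgl_path_start
    {p m : ℕ} (G : Fin m → Finset (Fin p))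
    (hpart : ∀ i : Fin p, ∃! g : Fin m, i ∈ G g)
    (α : ℝ) (hα : α ∈ Set.Icc (0:ℝ) 1)
    (f : (Fin p → ℝ) → ℝ)
    (hconv : ConvexOn ℝ Set.univ f) (hdiff : Differentiable ℝ f)
    (lam : ℝ) (hlam : 0 < lam) :
    ((∀ b : Fin p → ℝ, f 0 + lam * sglNorm G α 0 ≤ f b + lam * sglNorm G α b) ↔
      (∀ g : Fin m, ∀ x : Fin p → ℝ, (∀ i ∉ G g, x i = 0) →
        fderiv ℝ f 0 x ≤ lam * groupNorm (G g) α x)) ∧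
    ((∀ b : Fin p → ℝ, f 0 + lam * sglNorm G α 0 ≤ f b + lam * sglNorm G α b) ↔
      (∀ g : Fin m, ∀ x : Fin p → ℝ, (∀ i ∉ G g, x i = 0) →
        groupNorm (G g) α x ≤ 1 → fderiv ℝ f 0 x ≤ lam)) := by
  classical
  have hMin : ∀ g : Fin m, ∀ x : Fin p → ℝ, (∀ i ∉ G g, x i = 0) →
      (∀ b : Fin p → ℝ, f 0 + lam * sglNorm G α 0 ≤ f b + lam * sglNorm G α b) →
      fderiv ℝ f 0 x ≤ lam * groupNorm (G g) α x := by
    intro g x hx hmin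
    refine fderiv_le_of_min hdiff x _ ?_
    intro t ht
    have hb := hmin (t • x)
    rw [sglNorm_zero, sglNorm_smul, sglNorm_of_support G hpart α g x hx] at hb
    rw [abs_of_neg ht] at hb
    calc f 0 ≤ f (t • x) + lam * (-t * groupNorm (G g) α x) := by linarith
      _ = f (t • x) + -t * (lam * groupNorm (G g) α x) := by ring
  have h1 : (∀ b : Fin p → ℝ, f 0 + lam * sglNorm G α 0 ≤ f b + lam * sglNorm G α b) ↔
      (∀ g : Fin m, ∀ x : Fin p → ℝ, (∀ i ∉ G g, x i = 0) →
        fderiv ℝ f 0 x ≤ lam * groupNorm (G g) α x) := by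
    constructor
    · intro hmin g x hx
      exact hMin g x hx hmin
    · intro hC1 b
      rw [sglNorm_zero, mul_zero, add_zero]
      set bg : Fin m → (Fin p → ℝ) := fun g i => if i ∈ G g then b i else 0 with hbg
      have hsupp : ∀ g, ∀ i ∉ G g, bg g i = 0 := by
        intro g i hi
        simp [hbg, hi]
      have hsum : ∑ g, bg g = b := by
        funext i
        obtain ⟨hmem, huniq⟩ := (hpart i).choose_spec
        have : (∑ g, bg g) i = ∑ g, bg g i := by
          simp [Finset.sum_apply]
        rw [this, Finset.sum_eq_single (hpart i).choose]
        · simp [hbg, hmem]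
        · intro g' _ hne
          simp only [hbg]
          rw [if_neg]
          intro h
          exact hne (huniq g' h)
        · intro h
          exact absurd (Finset.mem_univ _) h
      have hfd : fderiv ℝ f 0 b = ∑ g, fderiv ℝ f 0 (bg g) := by
        conv_lhs => rw [← hsum]
        exact map_sum (fderiv ℝ f 0) _ _
      have hkey : ∀ g, -(fderiv ℝ f 0 (bg g)) ≤ lam * groupNorm (G g) α (bg g) := by
        intro g
        have hneg : ∀ i ∉ G g, (-(bg g)) i = 0 := by
          intro i hi
          simp [hsupp g i hi]
        have := hC1 g (-(bg g)) hneg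
        have hsmul : groupNorm (G g) α (-(bg g)) = groupNorm (G g) α (bg g) := by
          have : -(bg g) = (-1 : ℝ) • bg g := by funext i; simp
          rw [this, groupNorm_smul]
          simp
        rw [hsmul, map_neg] at this
        exact this
      have hsumnorm : ∑ g, groupNorm (G g) α (bg g) = sglNorm G α b := by
        rw [sglNorm_eq_sum G hpart]
        refine Finset.sum_congr rfl fun g _ => ?_
        exact groupNorm_congr _ _ fun i hi => by simp [hbg, hi]
      have hlow : -(fderiv ℝ f 0 b) ≤ lam * sglNorm G α b := by
        rw [hfd, ← hsumnorm, Finset.mul_sum, ← Finset.sum_neg_distrib]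
        exact Finset.sum_le_sum fun g _ => hkey g
      have hgrad := fderiv_le_sub hconv hdiff b
      linarith
  have h12 : (∀ g : Fin m, ∀ x : Fin p → ℝ, (∀ i ∉ G g, x i = 0) →
        fderiv ℝ f 0 x ≤ lam * groupNorm (G g) α x) ↔
      (∀ g : Fin m, ∀ x : Fin p → ℝ, (∀ i ∉ G g, x i = 0) →
        groupNorm (G g) α x ≤ 1 → fderiv ℝ f 0 x ≤ lam) := by
    constructor
    · intro hC1 g x hx hle
      calc fderiv ℝ f 0 x ≤ lam * groupNorm (G g) α x := hC1 g x hx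
        _ ≤ lam * 1 := mul_le_mul_of_nonneg_left hle hlam.le
        _ = lam := mul_one lam
    · intro hC2 g x hx
      by_cases hzero : x = 0
      · subst hzero
        rw [groupNorm_zero, mul_zero, map_zero]
      · have hpos := groupNorm_pos hα (G g) x hx hzero
        set c := groupNorm (G g) α x with hc
        have hy : ∀ i ∉ G g, (c⁻¹ • x) i = 0 := by
          intro i hi
          simp [hx i hi]
        have hyn : groupNorm (G g) α (c⁻¹ • x) = 1 := by
          rw [groupNorm_smul, abs_of_pos (inv_pos.2 hpos), ← hc, inv_mul_cancel₀ hpos.ne']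
        have := hC2 g (c⁻¹ • x) hy hyn.le
        rw [map_smul, smul_eq_mul] at this
        calc fderiv ℝ f 0 x = c * (c⁻¹ * fderiv ℝ f 0 x) := by
              field_simp
          _ ≤ c * lam := mul_le_mul_of_nonneg_left this hpos.le
          _ = lam * c := mul_comm _ _
  exact ⟨h1, h1.trans h12⟩
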